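/- arXiv:1612.04694 — 2 statements merged into one kernel-verified Lean document; each statement's English description precedes it below -/
import Mathlib

section
/- Let d ≥ 1, let α be a real number with 0 < α ≤ 1, and let X_1, …, X_N be real symmetric d×d matrices each satisfying α·I ⪯ X_j ⪯ I. Define R_0 = I and R_j = I + (I − X_j) R_{j−1} for j = 1, …, N. Then λ_max((R_N)ᵀ R_N) ≤ (2−α)/α² + (1−α)^N. -/
/-! Each factor `I - X_j` is positive semidefinite and dominated by `(1 - α) I`, so its
operator norm is at most `1 - α`. The recursion `R_j = I + (I - X_j) R_{j-1}` then keeps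
`‖R_j‖ ≤ 1/α` (as `1 + (1 - α)/α = 1/α`), and `λ_max(R_Nᵀ R_N) ≤ ‖R_Nᵀ R_N‖ = ‖R_N‖² ≤ 1/α²`,
which is below `(2 - α)/α² + (1 - α)^N`. -/

open Matrix

/-- The largest eigenvalue of a real symmetric `d × d` matrix `M`, expressed as the
supremum of the Rayleigh quotient `⟪x, M x⟫` over unit vectors `x`. -/
noncomputable def lambdaMax {d : ℕ} (M : Matrix (Fin d) (Fin d) ℝ) : ℝ :=
  ⨆ x : {x : EuclideanSpace ℝ (Fin d) // ‖x‖ = 1},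
    inner (𝕜 := ℝ) x.1 (Matrix.toEuclideanLin M x.1)

open scoped Matrix.Norms.L2Operator MatrixOrder

namespace Matrix

variable {n : Type*} [Fintype n] [DecidableEq n]

lemma l2_opNorm_one_le {𝕜 : Type*} [RCLike 𝕜] :
    ‖(1 : Matrix n n 𝕜)‖ ≤ 1 := by
  rw [← l2_opNorm_toEuclideanCLM, map_one]
  exact ContinuousLinearMap.norm_id_le

lemma PosSemidef.l2_opNorm_le {A : Matrix n n ℝ} {β : ℝ}
    (hA : A.PosSemidef) (hβ : 0 ≤ β) (hAβ : (β • (1 : Matrix n n ℝ) - A).PosSemidef) :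
    ‖A‖ ≤ β := by
  have hle : A ≤ algebraMap ℝ _ β := by rwa [Algebra.algebraMap_eq_smul_one, le_iff]
  rw [← cfc_id ℝ A hA.isHermitian.isSelfAdjoint]
  refine norm_cfc_le hβ fun x hx => ?_
  rw [id, Real.norm_eq_abs, abs_le]
  exact ⟨by linarith [spectrum_nonneg_of_nonneg hA.nonneg hx],
    (le_algebraMap_iff_spectrum_le hA.isHermitian.isSelfAdjoint).1 hle x hx⟩

lemma l2_opNorm_le_inv_of_eq_one_add_mul {𝕜 : Type*} [RCLike 𝕜]
    {N : ℕ} {α : ℝ} (hα : 0 < α) (hα1 : α ≤ 1)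
    {A : Fin N → Matrix n n 𝕜} (hA : ∀ j, ‖A j‖ ≤ 1 - α)
    {R : ℕ → Matrix n n 𝕜} (hR0 : R 0 = 1) (hR : ∀ j : Fin N, R (j + 1) = 1 + A j * R j) :
    ‖R N‖ ≤ α⁻¹ := by
  suffices ∀ j ≤ N, ‖R j‖ ≤ α⁻¹ from this N le_rfl
  intro j
  induction j with
  | zero =>
    intro _
    rw [hR0]
    exact l2_opNorm_one_le.trans (one_le_inv₀ hα |>.2 hα1)
  | succ j ih =>
    intro hj
    calc ‖R (j + 1)‖ = ‖1 + A ⟨j, hj⟩ * R j‖ := by rw [← hR ⟨j, hj⟩]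
      _ ≤ 1 + (1 - α) * α⁻¹ := by
        grw [norm_add_le, l2_opNorm_one_le, l2_opNorm_mul, hA, ih (by omega)]
        linarith
      _ = α⁻¹ := by field_simp; ring

end Matrix

lemma lambdaMax_le_l2_opNorm {d : ℕ} (M : Matrix (Fin d) (Fin d) ℝ) : lambdaMax M ≤ ‖M‖ := by
  refine Real.iSup_le (fun ⟨x, hx⟩ => ?_) (norm_nonneg M)
  calc inner ℝ x (toEuclideanLin M x)
        ≤ ‖x‖ * ‖toEuclideanCLM (n := Fin d) (𝕜 := ℝ) M x‖ := real_inner_le_norm _ _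
    _ ≤ ‖x‖ * (‖M‖ * ‖x‖) := by
        gcongr
        exact (toEuclideanCLM (n := Fin d) (𝕜 := ℝ) M).le_opNorm x
    _ = ‖M‖ := by rw [hx]; ring

lemma lambdaMax_transpose_mul_self_le {d : ℕ} (A : Matrix (Fin d) (Fin d) ℝ) :
    lambdaMax (Aᵀ * A) ≤ ‖A‖ ^ 2 := by
  have := lambdaMax_le_l2_opNorm (Aᴴ * A)
  rwa [l2_opNorm_conjTranspose_mul_self, ← sq, conjTranspose_eq_transpose_of_trivial] at this

theorem lambdaMax_transpose_mul_self_estimator_le_general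
    (d : ℕ) (α : ℝ) (hα : 0 < α) (hα1 : α ≤ 1) (N : ℕ)
    (X : Fin N → Matrix (Fin d) (Fin d) ℝ)
    (hlow : ∀ j, (X j - α • (1 : Matrix (Fin d) (Fin d) ℝ)).PosSemidef)
    (hup : ∀ j, ((1 : Matrix (Fin d) (Fin d) ℝ) - X j).PosSemidef)
    (R : ℕ → Matrix (Fin d) (Fin d) ℝ)
    (hR0 : R 0 = 1)
    (hRstep : ∀ j : Fin N, R (j + 1) = 1 + ((1 : Matrix (Fin d) (Fin d) ℝ) - X j) * R j) :
    lambdaMax ((R N)ᵀ * R N) ≤ (2 - α) / α ^ 2 + (1 - α) ^ N := by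
  have hfactor (j : Fin N) : ‖(1 : Matrix (Fin d) (Fin d) ℝ) - X j‖ ≤ 1 - α :=
    (hup j).l2_opNorm_le (by linarith) <| by
      rw [sub_smul, one_smul, sub_sub_sub_cancel_left]
      exact hlow j
  have hRN : ‖R N‖ ≤ α⁻¹ := l2_opNorm_le_inv_of_eq_one_add_mul hα hα1 hfactor hR0 hRstep
  calc lambdaMax ((R N)ᵀ * R N) ≤ ‖R N‖ ^ 2 := lambdaMax_transpose_mul_self_le (R N)
    _ ≤ (α⁻¹) ^ 2 := by gcongr
    _ ≤ (2 - α) / α ^ 2 + (1 - α) ^ N := by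
        rw [inv_pow, inv_eq_one_div]
        have hpow : 0 ≤ (1 - α) ^ N := pow_nonneg (by linarith) N
        have hdiv : 1 / α ^ 2 ≤ (2 - α) / α ^ 2 := by gcongr; linarith
        linarith

/-- Let `d ≥ 1`, `0 < α ≤ 1`, and let `X_1, …, X_N` be real symmetric
`d × d` matrices each satisfying `α • I ⪯ X_j ⪯ I` in the Loewner order.  Define `R_0 = I`
and `R_j = I + (I - X_j) R_{j-1}` for `j = 1, …, N`.  Then
`λ_max(R_Nᵀ R_N) ≤ (2-α)/α² + (1-α)^N`. -/
theorem lambdaMax_transpose_mul_self_estimator_le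
    (d : ℕ) (hd : 1 ≤ d) (α : ℝ) (hα : 0 < α) (hα1 : α ≤ 1) (N : ℕ)
    (X : Fin N → Matrix (Fin d) (Fin d) ℝ)
    (hsymm : ∀ j, (X j).IsSymm)
    (hlow : ∀ j, (X j - α • (1 : Matrix (Fin d) (Fin d) ℝ)).PosSemidef)
    (hup : ∀ j, ((1 : Matrix (Fin d) (Fin d) ℝ) - X j).PosSemidef)
    (R : ℕ → Matrix (Fin d) (Fin d) ℝ)
    (hR0 : R 0 = 1)
    (hRstep : ∀ j : Fin N, R (j + 1) = 1 + ((1 : Matrix (Fin d) (Fin d) ℝ) - X j) * R j) :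
    lambdaMax ((R N)ᵀ * R N) ≤ (2 - α) / α ^ 2 + (1 - α) ^ N :=
  lambdaMax_transpose_mul_self_estimator_le_general d α hα hα1 N X hlow hup R hR0 hRstep
end

section
/- Let d ≥ 1, let H be a real d×d matrix, let N ≥ 1, and let (Ω, 𝔽, ℙ) be a probability space carrying independent Bochner-integrable random matrices X_1, …, X_N : Ω → ℝ^{d×d} with E[X_j] = H for every j. Define the random matrices R_0 = I and R_j = I + (I − X_j) R_{j−1} for j = 1, …, N. Then E[R_N] = Σ_{j=0}^{N} (I − H)^j. -/
/-!
`R k` depends only on the samples `X i` with `i < k`, so it is independent of `X k`.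
Hence `E[(I - X k) R k] = (I - H) E[R k]`, and the expectations obey
`E[R (k + 1)] = I + (I - H) E[R k]`, the recursion of the partial sums of the
von Neumann series of `H`.
-/

open Finset MeasureTheory ProbabilityTheory

namespace ProbabilityTheory

variable {Ω A : Type*} {mΩ : MeasurableSpace Ω} {μ : Measure Ω}
  [NormedRing A] [NormedAlgebra ℝ A] [MeasurableSpace A] [BorelSpace A]

theorem IndepFun.integrable_fun_mul_of_normedAlgebra {X Y : Ω → A} (hXY : X ⟂ᵢ[μ] Y)
    (hX : Integrable X μ) (hY : Integrable Y μ) : Integrable (fun ω ↦ X ω * Y ω) μ :=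
  hXY.integrable_bilin hX hY (ContinuousLinearMap.mul ℝ A)

theorem IndepFun.integral_fun_mul_of_normedAlgebra [CompleteSpace A] {X Y : Ω → A}
    (hXY : X ⟂ᵢ[μ] Y) (hX : Integrable X μ) (hY : Integrable Y μ) :
    ∫ ω, X ω * Y ω ∂μ = (∫ ω, X ω ∂μ) * ∫ ω, Y ω ∂μ :=
  hXY.integral_bilin hX hY (ContinuousLinearMap.mul ℝ A)

end ProbabilityTheory

section Estimator

variable {Ω A : Type*} {mΩ : MeasurableSpace Ω} {μ : Measure Ω}
  [NormedRing A] [SecondCountableTopology A]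
  [MeasurableSpace A] [BorelSpace A] {N : ℕ} {X : Fin N → Ω → A} {R : ℕ → Ω → A}

theorem measurable_estimator_comap_samples (T : Finset (Fin N))
    (hR0 : ∀ ω, R 0 ω = 1) (hRstep : ∀ j : Fin N, ∀ ω, R (j + 1) ω = 1 + (1 - X j ω) * R j ω)
    {k : ℕ} (hk : k ≤ N) (hT : ∀ i : Fin N, (i : ℕ) < k → i ∈ T) :
    Measurable[MeasurableSpace.comap (fun ω (i : T) ↦ X i ω) MeasurableSpace.pi] (R k) := by
  induction k with
  | zero => rw [funext hR0]; exact measurable_const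
  | succ k ih =>
    have hX : Measurable[MeasurableSpace.comap (fun ω (i : T) ↦ X i ω) MeasurableSpace.pi]
        (X ⟨k, hk⟩) :=
      (measurable_pi_apply (⟨⟨k, hk⟩, hT _ (Nat.lt_succ_self k)⟩ : T)).comp
        (comap_measurable fun ω (i : T) ↦ X i ω)
    rw [funext (hRstep ⟨k, hk⟩)]
    exact measurable_const.add ((measurable_const.sub hX).mul
      (ih (Nat.le_of_succ_le hk) fun i hi ↦ hT i (Nat.lt_succ_of_lt hi)))

theorem indepFun_sample_estimator (hX : ∀ i, AEMeasurable (X i) μ) (hindep : iIndepFun X μ)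
    (hR0 : ∀ ω, R 0 ω = 1) (hRstep : ∀ j : Fin N, ∀ ω, R (j + 1) ω = 1 + (1 - X j ω) * R j ω)
    (k : Fin N) : X k ⟂ᵢ[μ] R k := by
  set past : Finset (Fin N) := univ.filter fun i ↦ i < k
  have hdisj : Disjoint {k} past := by simp [past]
  have htuples := hindep.indepFun_finset₀ {k} past hdisj hX
  have hR : Measurable[MeasurableSpace.comap (fun ω (i : past) ↦ X i ω) MeasurableSpace.pi]
      (R k) :=
    measurable_estimator_comap_samples past hR0 hRstep k.isLt.le fun i hi ↦ by
      simpa [past] using hi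
  rw [IndepFun_iff_Indep] at htuples ⊢
  refine indep_of_indep_of_le_right (indep_of_indep_of_le_left htuples ?_) hR.comap_le
  exact ((measurable_pi_apply (⟨k, mem_singleton_self k⟩ : ({k} : Finset (Fin N)))).comp
    (comap_measurable fun ω (i : ({k} : Finset (Fin N))) ↦ X i ω)).comap_le

variable [NormedAlgebra ℝ A] [CompleteSpace A] [IsProbabilityMeasure μ]

theorem integrable_estimator_and_integral_eq_geom_sum {H : A}
    (hint : ∀ i, Integrable (X i) μ) (hindep : iIndepFun X μ) (hmean : ∀ i, ∫ ω, X i ω ∂μ = H)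
    (hR0 : ∀ ω, R 0 ω = 1) (hRstep : ∀ j : Fin N, ∀ ω, R (j + 1) ω = 1 + (1 - X j ω) * R j ω)
    {k : ℕ} (hk : k ≤ N) :
    Integrable (R k) μ ∧ ∫ ω, R k ω ∂μ = ∑ j ∈ range (k + 1), (1 - H) ^ j := by
  induction k with
  | zero => simp [funext hR0]
  | succ k ih =>
    obtain ⟨hRint, hRmean⟩ := ih (Nat.le_of_succ_le hk)
    have hXR : (fun ω ↦ 1 - X ⟨k, hk⟩ ω) ⟂ᵢ[μ] R k :=
      (indepFun_sample_estimator (fun i ↦ (hint i).aemeasurable) hindep hR0 hRstep ⟨k, hk⟩).comp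
        (measurable_const.sub measurable_id) measurable_id
    have hXint : Integrable (fun ω ↦ 1 - X ⟨k, hk⟩ ω) μ := (integrable_const 1).sub (hint _)
    have hprod := hXR.integrable_fun_mul_of_normedAlgebra hXint hRint
    rw [funext (hRstep ⟨k, hk⟩)]
    refine ⟨(integrable_const 1).add hprod, ?_⟩
    rw [integral_add (integrable_const 1) hprod, hXR.integral_fun_mul_of_normedAlgebra hXint hRint,
      integral_sub (integrable_const 1) (hint _), hmean, hRmean, geom_sum_succ (n := k + 1),
      integral_const, probReal_univ, one_smul, add_comm]

end Estimator

open Matrix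
open scoped Matrix.Norms.L2Operator

theorem expectation_estimator_eq_vonNeumann_partial_sum_general
    (d : ℕ) (H : Matrix (Fin d) (Fin d) ℝ) (N : ℕ)
    (Ω : Type*) [MeasureSpace Ω] [IsProbabilityMeasure (volume : Measure Ω)]
    (X : Fin N → Ω → Matrix (Fin d) (Fin d) ℝ)
    (hint : ∀ j, Integrable (X j))
    (hindep : ProbabilityTheory.iIndepFun
      (m := fun _ => borel (Matrix (Fin d) (Fin d) ℝ)) X volume)
    (hmean : ∀ j, (∫ ω, X j ω) = H)
    (R : ℕ → Ω → Matrix (Fin d) (Fin d) ℝ)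
    (hR0 : ∀ ω, R 0 ω = 1)
    (hRstep : ∀ j : Fin N, ∀ ω,
      R (j.val + 1) ω = 1 + ((1 : Matrix (Fin d) (Fin d) ℝ) - X j ω) * R j.val ω) :
    (∫ ω, R N ω) = ∑ j ∈ Finset.range (N + 1), ((1 : Matrix (Fin d) (Fin d) ℝ) - H) ^ j := by
  borelize (Matrix (Fin d) (Fin d) ℝ)
  exact (integrable_estimator_and_integral_eq_geom_sum hint hindep hmean hR0 hRstep le_rfl).2

/-- expectation identity, Lemma 1 / eq. (8) of the paper.  Let `d ≥ 1`,
`H` a real `d × d` matrix, `N ≥ 1`, and let `X_1, …, X_N` be independent Bochner-integrable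
random matrices on a probability space with `E[X_j] = H` for every `j`.  With `R_0 = I` and
`R_j = I + (I - X_j) R_{j-1}`, we have `E[R_N] = ∑_{j=0}^{N} (I - H)^j`. -/
theorem expectation_estimator_eq_vonNeumann_partial_sum
    (d : ℕ) (hd : 1 ≤ d) (H : Matrix (Fin d) (Fin d) ℝ) (N : ℕ) (hN : 1 ≤ N)
    (Ω : Type*) [MeasureSpace Ω] [IsProbabilityMeasure (volume : Measure Ω)]
    (X : Fin N → Ω → Matrix (Fin d) (Fin d) ℝ)
    (hint : ∀ j, Integrable (X j))
    (hindep : ProbabilityTheory.iIndepFun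
      (m := fun _ => borel (Matrix (Fin d) (Fin d) ℝ)) X volume)
    (hmean : ∀ j, (∫ ω, X j ω) = H)
    (R : ℕ → Ω → Matrix (Fin d) (Fin d) ℝ)
    (hR0 : ∀ ω, R 0 ω = 1)
    (hRstep : ∀ j : Fin N, ∀ ω,
      R (j.val + 1) ω = 1 + ((1 : Matrix (Fin d) (Fin d) ℝ) - X j ω) * R j.val ω) :
    (∫ ω, R N ω) = ∑ j ∈ Finset.range (N + 1), ((1 : Matrix (Fin d) (Fin d) ℝ) - H) ^ j :=
  expectation_estimator_eq_vonNeumann_partial_sum_general d H N Ω X hint hindep hmean R hR0 hRstep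
end
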